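/- arXiv:1711.04938 — 2 statements merged into one kernel-verified Lean document; each statement's English description precedes it below -/
import Mathlib

section
/- Let κ be a regular uncountable cardinal, let λ be the least inaccessible cardinal above κ, and let U be a κ-complete normal fine ultrafilter on P_κ(λ). Then the set D = {P ∈ P_κ(λ) : λ_P is the least inaccessible cardinal above κ_P} belongs to U. -/
open Set Cardinal

/-- The order type of a set of ordinals. -/
noncomputable def otp (S : Set Ordinal.{0}) : Ordinal.{0} :=
  sInf {α : Ordinal.{0} | Nonempty (↥S ≃o ↥(Iio α))}

/-- `P_κ(λ)`: sets `P ⊆ λ` of order type `< κ` with `P ∩ κ` an ordinal `< κ`. -/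
def PklSet (κ lam : Cardinal.{0}) : Set (Set Ordinal.{0}) :=
  {P | P ⊆ Iio lam.ord ∧ otp P < κ.ord ∧ ∃ α < κ.ord, P ∩ Iio κ.ord = Iio α}

/-- `λ_P`, the order type of `P`. -/
noncomputable def lpt (P : Set Ordinal.{0}) : Ordinal.{0} := otp P

/-- `κ_P = P ∩ κ` (as an ordinal, i.e. the order type of `P ∩ κ`). -/
noncomputable def kpt (κ : Cardinal.{0}) (P : Set Ordinal.{0}) : Ordinal.{0} :=
  otp (P ∩ Iio κ.ord)

/-- `P ≺ Q` iff `P ⊆ Q` and `λ_P < κ_Q`. -/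
def Prec (κ : Cardinal.{0}) (P Q : Set Ordinal.{0}) : Prop := P ⊆ Q ∧ lpt P < kpt κ Q

/-- `U` is `κ`-complete: closed under intersections of families of fewer than `κ` members. -/
def PklComplete (κ : Cardinal.{0}) {X : Type*} (U : Ultrafilter X) : Prop :=
  ∀ γ : Ordinal.{0}, γ.card < κ → ∀ f : ↥(Iio γ) → Set X, (∀ i, f i ∈ U) → (⋂ i, f i) ∈ U

/-- `U` is fine: for every `α < λ`, the set of `P` with `α ∈ P` is in `U`. -/
def PklFine (κ lam : Cardinal.{0}) (U : Ultrafilter ↥(PklSet κ lam)) : Prop :=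
  ∀ α < lam.ord, {P : ↥(PklSet κ lam) | α ∈ P.1} ∈ U

/-- `U` is normal: every choice function on a set in `U` is constant on a set in `U`. -/
def PklNormal (κ lam : Cardinal.{0}) (U : Ultrafilter ↥(PklSet κ lam)) : Prop :=
  ∀ A : Set ↥(PklSet κ lam), A ∈ U → ∀ f : ↥(PklSet κ lam) → Ordinal.{0},
    (∀ P ∈ A, f P ∈ P.1) → ∃ α : Ordinal.{0}, {P | P ∈ A ∧ f P = α} ∈ U

/-- An ordinal is an inaccessible cardinal. -/
def IsInaccOrd (o : Ordinal.{0}) : Prop := o.card.ord = o ∧ o.card.IsInaccessible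

/-- `o` is the least inaccessible (as an ordinal) above `a`. -/
def IsLeastInaccOrdAbove (a o : Ordinal.{0}) : Prop :=
  a < o ∧ IsInaccOrd o ∧ ∀ o', a < o' → IsInaccOrd o' → o ≤ o'

/-- `lam` is the least inaccessible cardinal above `κ`. -/
def IsLeastInaccAbove (κ lam : Cardinal.{0}) : Prop :=
  κ < lam ∧ lam.IsInaccessible ∧ ∀ μ, κ < μ → μ.IsInaccessible → lam ≤ μ

/-- A condition of the Levy collapse `Col(ν, <ρ)`, coded by its graph: a partial function
on `ν × ρ` of size `< ν` with `p(α, β) ∈ β`. -/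
def IsLevyCond (ν ρ : Cardinal.{0}) (s : Set ((Ordinal.{0} × Ordinal.{0}) × Ordinal.{0})) :
    Prop :=
  (∀ x ∈ s, x.1.1 < ν.ord ∧ x.1.2 < ρ.ord ∧ x.2 < x.1.2) ∧
  (∀ x ∈ s, ∀ y ∈ s, x.1 = y.1 → x.2 = y.2) ∧
  Cardinal.mk ↥(Prod.fst '' s) < Cardinal.lift.{1} ν

/-!
Write `o = otp P`. Normality makes diagonal intersections of `λ`-sequences of measure-one sets
measure one, and lets a structure given on almost every `P` be pinned down pointwise, which yields
an ultrafilter limit on `λ`. For almost every `P`: `o` is regular, since otherwise a limit of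
cofinal maps `P ∩ β → P` would make `λ` singular; `o` is a strong limit, since otherwise a limit
of families separating `P` by subsets of `P ∩ β` would give `λ ≤ 2^|β|`; and `κ_P < o` as `κ ∈ P`.
For minimality, every `o' < o` is `otp (P ∩ β)` with `β ∈ P`. For `κ < β < λ`, `β` is not
inaccessible, and the witness (a cofinal map into `β` from some `γ < β`, or a family separating
`β` by subsets of some `γ < β`) transfers to `P ∩ β` once `P` is closed under the functions it
involves.
-/

open Filter
open scoped Ordinal

section OrderType

variable {S T : Set Ordinal.{0}} {δ : Ordinal.{0}}

theorem otp_eq_of_orderIso {α : Ordinal.{0}} (e : S ≃o Iio α) : otp S = α := by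
  have hmem : otp S ∈ {α : Ordinal.{0} | Nonempty (S ≃o Iio α)} := csInf_mem ⟨α, ⟨e⟩⟩
  have := (hmem.some.symm.trans e).ordinalType_congr
  rwa [Ordinal.type_lt_Iio, Ordinal.type_lt_Iio, Ordinal.lift_inj] at this

theorem otp_Iio (α : Ordinal.{0}) : otp (Iio α) = α :=
  otp_eq_of_orderIso (OrderIso.refl _)

theorem typeLT_eq_lift_otp (hS : S ⊆ Iio δ) : typeLT S = Ordinal.lift.{1} (otp S) := by
  have hle : typeLT S ≤ Ordinal.lift.{1} δ :=
    (Ordinal.type_mono hS).trans_eq (Ordinal.type_lt_Iio δ)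
  obtain ⟨α, hα⟩ := Ordinal.mem_range_lift_of_le hle
  obtain ⟨e⟩ := Ordinal.type_eq.1 ((Ordinal.type_lt_Iio α).trans hα)
  rw [← hα, otp_eq_of_orderIso (OrderIso.ofRelIsoLT e.symm)]

theorem otp_mono (hT : T ⊆ Iio δ) (hST : S ⊆ T) : otp S ≤ otp T := by
  rw [← Ordinal.lift_le.{1}, ← typeLT_eq_lift_otp (hST.trans hT), ← typeLT_eq_lift_otp hT]
  exact Ordinal.type_mono hST

theorem mk_eq_lift_card_otp (hS : S ⊆ Iio δ) : #S = Cardinal.lift.{1} (otp S).card := by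
  rw [Ordinal.lift_card, ← typeLT_eq_lift_otp hS, Ordinal.card_type]

theorem lift_cof_otp (hS : S ⊆ Iio δ) : Cardinal.lift.{1} (otp S).cof = Order.cof S := by
  rw [Ordinal.lift_cof, ← typeLT_eq_lift_otp hS, Ordinal.cof_type]

def interIioOrderIso (T : Set Ordinal.{0}) {β : Ordinal.{0}} (hβ : β ∈ T) :
    ↥(T ∩ Iio β) ≃o Iio (⟨β, hβ⟩ : T) where
  toFun x := ⟨⟨x.1, x.2.1⟩, x.2.2⟩
  invFun x := ⟨x.1.1, x.1.2, x.2⟩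
  left_inv _ := rfl
  right_inv _ := rfl
  map_rel_iff' := Iff.rfl

theorem lift_otp_inter_Iio (hT : T ⊆ Iio δ) {β : Ordinal.{0}} (hβ : β ∈ T) :
    Ordinal.lift.{1} (otp (T ∩ Iio β)) = Ordinal.typein (α := T) LT.lt ⟨β, hβ⟩ := by
  rw [← typeLT_eq_lift_otp (inter_subset_left.trans hT),
    (interIioOrderIso T hβ).ordinalType_congr, Ordinal.type_Iio_lt]

theorem otp_inter_Iio_lt (hT : T ⊆ Iio δ) {β : Ordinal.{0}} (hβ : β ∈ T) :
    otp (T ∩ Iio β) < otp T := by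
  rw [← Ordinal.lift_lt.{1}, lift_otp_inter_Iio hT hβ, ← typeLT_eq_lift_otp hT]
  exact Ordinal.typein_lt_type _ _

theorem exists_otp_inter_Iio_eq (hT : T ⊆ Iio δ) {o : Ordinal.{0}} (ho : o < otp T) :
    ∃ β ∈ T, otp (T ∩ Iio β) = o := by
  rw [← Ordinal.lift_lt.{1}, ← typeLT_eq_lift_otp hT] at ho
  obtain ⟨⟨β, hβ⟩, h⟩ := Ordinal.typein_surj _ ho
  exact ⟨β, hβ, Ordinal.lift_inj.1 ((lift_otp_inter_Iio hT hβ).trans h)⟩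

end OrderType

def IsCofinalMap (c : Ordinal.{0} → Ordinal.{0}) (S T : Set Ordinal.{0}) : Prop :=
  MapsTo c S T ∧ ∀ x ∈ T, ∃ ξ ∈ S, x ≤ c ξ

section Cofinality

variable {S T : Set Ordinal.{0}} {δ : Ordinal.{0}}

theorem lift_cof_otp_le_mk (hT : T ⊆ Iio δ) {c : Ordinal.{0} → Ordinal.{0}}
    (hc : IsCofinalMap c S T) : Cardinal.lift.{1} (otp T).cof ≤ #S := by
  rw [lift_cof_otp hT]
  have hcof : IsCofinal (Subtype.val ⁻¹' (c '' S) : Set T) := fun x ↦ by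
    obtain ⟨ξ, hξ, hx⟩ := hc.2 x.1 x.2
    exact ⟨⟨c ξ, hc.1 hξ⟩, mem_image_of_mem c hξ, hx⟩
  exact (Order.cof_le hcof).trans
    ((mk_preimage_of_injective _ _ Subtype.val_injective).trans mk_image_le)

theorem ord_cof_otp_lt_of_isCofinalMap (hT : T ⊆ Iio δ) {β : Ordinal.{0}} (hβ : β ∈ T)
    {c : Ordinal.{0} → Ordinal.{0}} (hc : IsCofinalMap c (T ∩ Iio β) T) :
    (otp T).cof.ord < otp T := by
  have hcof := lift_cof_otp_le_mk hT hc
  rw [mk_eq_lift_card_otp (inter_subset_left.trans hT), Cardinal.lift_le] at hcof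
  calc (otp T).cof.ord ≤ (otp (T ∩ Iio β)).card.ord := ord_le_ord.2 hcof
    _ ≤ otp (T ∩ Iio β) := ord_card_le _
    _ < otp T := otp_inter_Iio_lt hT hβ

theorem exists_isCofinalMap_of_ord_cof_otp_lt (hT : T ⊆ Iio δ) (h : (otp T).cof.ord < otp T) :
    ∃ β ∈ T, ∃ c, IsCofinalMap c (T ∩ Iio β) T := by
  classical
  obtain ⟨s, hs, hs_mk⟩ := Order.exists_cof_eq T
  obtain ⟨β, hβ, hβ_otp⟩ := exists_otp_inter_Iio_eq hT h
  have : #(T ∩ Iio β : Set Ordinal.{0}) = #s := by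
    rw [hs_mk, ← lift_cof_otp hT, mk_eq_lift_card_otp (inter_subset_left.trans hT), hβ_otp,
      card_ord]
  obtain ⟨g⟩ := Cardinal.eq.1 this
  refine ⟨β, hβ, fun ξ ↦ if h : ξ ∈ T ∩ Iio β then (g ⟨ξ, h⟩).1.1 else 0,
    fun ξ hξ ↦ by simp only [dif_pos hξ]; exact (g _).1.2, fun x hx ↦ ?_⟩
  obtain ⟨t, ht, hxt⟩ := hs ⟨x, hx⟩
  refine ⟨g.symm ⟨t, ht⟩, (g.symm ⟨t, ht⟩).2, ?_⟩
  simp only [dif_pos (g.symm ⟨t, ht⟩).2, Subtype.coe_eta, Equiv.apply_symm_apply]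
  exact hxt

end Cofinality

section Separation

variable {α : Type*}

def Separates (R : α → α → Prop) (S T : Set α) : Prop :=
  ∀ y ∈ S, ∀ y' ∈ S, y ≠ y' → ∃ ζ ∈ T, ¬(R y ζ ↔ R y' ζ)

theorem mk_le_mk_set_iff_exists_separates {S T : Set α} :
    #S ≤ #(Set T) ↔ ∃ R : α → α → Prop, Separates R S T := by
  constructor
  · rintro ⟨f⟩
    refine ⟨fun y ζ ↦ ∃ (hy : y ∈ S) (hζ : ζ ∈ T), ⟨ζ, hζ⟩ ∈ f ⟨y, hy⟩,
      fun y hy y' hy' hne ↦ ?_⟩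
    have : f ⟨y, hy⟩ ≠ f ⟨y', hy'⟩ := fun h ↦ hne (congrArg Subtype.val (f.injective h))
    obtain ⟨⟨ζ, hζ⟩, hmem⟩ := Set.symmDiff_nonempty.2 this
    refine ⟨ζ, hζ, ?_⟩
    rcases hmem with ⟨h1, h2⟩ | ⟨h1, h2⟩ <;> simp_all
  · rintro ⟨R, hR⟩
    refine ⟨⟨fun y ↦ {ζ | R y ζ}, fun y y' h ↦ ?_⟩⟩
    by_contra hne
    obtain ⟨ζ, hζ, hsep⟩ := hR y y.2 y' y'.2 (fun h' ↦ hne (Subtype.ext h'))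
    exact hsep (Set.ext_iff.1 h ⟨ζ, hζ⟩)

end Separation

section Inaccessible

variable {o o' : Ordinal.{0}}

theorem IsInaccOrd.ord_cof_eq (h : IsInaccOrd o) : o.cof.ord = o := by
  have hcof := h.2.isRegular.cof_ord
  rw [h.1] at hcof
  rw [hcof, h.1]

theorem not_isInaccOrd_of_ord_cof_lt (h : o.cof.ord < o) : ¬IsInaccOrd o :=
  fun hi ↦ h.ne hi.ord_cof_eq

theorem not_isInaccOrd_of_card_le_two_power (ho' : o' < o) (h : o.card ≤ 2 ^ o'.card) :
    ¬IsInaccOrd o := by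
  rintro ⟨hord, hinacc⟩
  exact (h.trans_lt (hinacc.isStrongPrelimit (lt_ord.1 (by rwa [hord])))).false

theorem isInaccOrd_of_le_ord_cof (hω : ω < o) (hcof : o ≤ o.cof.ord)
    (hlim : ∀ a < o, ((2 : Cardinal) ^ a.card).ord < o) : IsInaccOrd o := by
  have hord : o.card.ord = o :=
    le_antisymm (ord_card_le o) (hcof.trans (ord_le_ord.2 (Ordinal.cof_le_card o)))
  refine ⟨hord, ⟨?_, ?_, fun x hx ↦ ?_⟩⟩
  · rwa [← ord_lt_ord, hord, ord_aleph0]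
  · rw [hord]
    exact (Ordinal.card_le_card hcof).trans_eq (card_ord _)
  · have h2 := hlim x.ord ((ord_lt_ord.2 hx).trans_eq hord)
    rwa [card_ord, ← hord, ord_lt_ord] at h2

theorem IsLeastInaccAbove.not_isInaccOrd {κ lam : Cardinal.{0}}
    (hlam : IsLeastInaccAbove κ lam) (hκo : κ.ord < o) (ho : o < lam.ord) : ¬IsInaccOrd o := by
  rintro ⟨hord, hinacc⟩
  have hκ : κ < o.card := by rwa [← ord_lt_ord, hord]
  exact (ho.trans_le ((ord_le_ord.2 (hlam.2.2 _ hκ hinacc)).trans_eq hord)).false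

end Inaccessible

namespace PklNormal

variable {κ lam : Cardinal.{0}} {U : Ultrafilter ↥(PklSet κ lam)}

theorem exists_eventually_eq (hnorm : PklNormal κ lam U) {f : ↥(PklSet κ lam) → Ordinal.{0}}
    (hf : ∀ᶠ P in U, f P ∈ P.1) : ∃ α < lam.ord, ∀ᶠ P in U, f P = α := by
  obtain ⟨α, hα⟩ := hnorm _ hf f fun _ ↦ id
  have hα' : ∀ᶠ P in U, f P ∈ P.1 ∧ f P = α := hα
  obtain ⟨P, hP, rfl⟩ := hα'.exists
  exact ⟨f P, P.2.1 hP, hα'.mono fun _ ↦ And.right⟩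

theorem eventually_forall_mem (hnorm : PklNormal κ lam U)
    {q : Ordinal.{0} → ↥(PklSet κ lam) → Prop}
    (h : ∀ α < lam.ord, ∀ᶠ P in U, q α P) :
    ∀ᶠ P in U, ∀ α ∈ P.1, q α P := by
  by_contra hcon
  have hbad : ∀ᶠ P in U, ∃ α, α ∈ P.1 ∧ ¬q α P := by
    simpa only [not_forall, exists_prop] using Ultrafilter.eventually_not.2 hcon
  obtain ⟨f, hf⟩ := hbad.choice
  obtain ⟨α, hα, hfα⟩ := hnorm.exists_eventually_eq (hf.mono fun _ ↦ And.left)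
  obtain ⟨P, hPf, hPα, hPq⟩ := (hf.and (hfα.and (h α hα))).exists
  exact hPf.2 (hPα ▸ hPq)

theorem eventually_mapsTo (hnorm : PklNormal κ lam U) (hfine : PklFine κ lam U)
    {g : Ordinal.{0} → Ordinal.{0}} {S : Set Ordinal.{0}} (hg : MapsTo g S (Iio lam.ord)) :
    ∀ᶠ P : ↥(PklSet κ lam) in U, MapsTo g (P.1 ∩ S) P.1 :=
  (hnorm.eventually_forall_mem (q := fun α P ↦ α ∈ S → g α ∈ P.1) fun _ _ ↦
      eventually_imp_distrib_left.2 fun hα ↦ hfine _ (hg hα)).mono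
    fun _ h _ hα ↦ h _ hα.1 hα.2

theorem eventually_isCofinalMap_inter (hnorm : PklNormal κ lam U) (hfine : PklFine κ lam U)
    {S T : Set Ordinal.{0}} (hS : S ⊆ Iio lam.ord) (hT : T ⊆ Iio lam.ord)
    {c : Ordinal.{0} → Ordinal.{0}} (hc : IsCofinalMap c S T) :
    ∀ᶠ P : ↥(PklSet κ lam) in U, IsCofinalMap c (P.1 ∩ S) (P.1 ∩ T) := by
  choose! h hhS hh using hc.2
  filter_upwards [hnorm.eventually_mapsTo hfine (hc.1.mono_right hT),
    hnorm.eventually_mapsTo hfine (fun x hx ↦ hS (hhS x hx))] with P hcP hhP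
  exact ⟨fun ξ hξ ↦ ⟨hcP hξ, hc.1 hξ.2⟩,
    fun x hx ↦ ⟨h x, ⟨hhP hx, hhS x hx.2⟩, hh x hx.2⟩⟩

theorem eventually_separates_inter (hnorm : PklNormal κ lam U) (hfine : PklFine κ lam U)
    {R : Ordinal.{0} → Ordinal.{0} → Prop} {S T : Set Ordinal.{0}} (hT : T ⊆ Iio lam.ord)
    (hR : Separates R S T) :
    ∀ᶠ P : ↥(PklSet κ lam) in U, Separates R (P.1 ∩ S) (P.1 ∩ T) := by
  choose! d hdT hd using hR
  have hclosed : ∀ y < lam.ord, ∀ᶠ P : ↥(PklSet κ lam) in U,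
      y ∈ S → MapsTo (d y) (P.1 ∩ (S \ {y})) P.1 := fun y _ ↦
    eventually_imp_distrib_left.2 fun hy ↦
      hnorm.eventually_mapsTo hfine fun y' hy' ↦ hT (hdT y hy y' hy'.1 fun h ↦ hy'.2 h.symm)
  filter_upwards [hnorm.eventually_forall_mem hclosed] with P hP
  intro y hy y' hy' hne
  have hdP : d y y' ∈ P.1 := hP y hy.1 hy.2 ⟨hy'.1, hy'.2, fun h ↦ hne h.symm⟩
  exact ⟨d y y', ⟨hdP, hdT y hy.2 y' hy'.2 hne⟩, hd y hy.2 y' hy'.2 hne⟩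

theorem exists_isCofinalMap_Iio (hnorm : PklNormal κ lam U) (hfine : PklFine κ lam U)
    {β : Ordinal.{0}} (hβ : β ≤ lam.ord)
    {c : ↥(PklSet κ lam) → Ordinal.{0} → Ordinal.{0}}
    (hc : ∀ᶠ P in U, IsCofinalMap (c P) (P.1 ∩ Iio β) P.1) :
    ∃ c', IsCofinalMap c' (Iio β) (Iio lam.ord) := by
  have hval : ∀ ξ ∈ Iio β, ∃ v < lam.ord, ∀ᶠ P in U, c P ξ = v := fun ξ hξ ↦
    hnorm.exists_eventually_eq <| (hc.and (hfine ξ (hξ.trans_le hβ))).mono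
      fun P h ↦ h.1.1 ⟨h.2, hξ⟩
  choose! c' hc'lt hc' using hval
  refine ⟨c', fun ξ hξ ↦ hc'lt ξ hξ, fun x hx ↦ ?_⟩
  have hξ : ∀ᶠ P in U, ∃ ξ, ξ ∈ P.1 ∩ Iio β ∧ x ≤ c P ξ :=
    (hc.and (hfine x hx)).mono fun P h ↦ by simpa only [exists_prop] using h.1.2 x h.2
  obtain ⟨f, hf⟩ := hξ.choice
  obtain ⟨ξ, -, hfξ⟩ := hnorm.exists_eventually_eq (hf.mono fun _ h ↦ h.1.1)
  have hξβ : ξ ∈ Iio β := by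
    obtain ⟨P, hPf, hPξ⟩ := (hf.and hfξ).exists
    exact hPξ ▸ hPf.1.2
  obtain ⟨P, hPf, hPξ, hPc⟩ := (hf.and (hfξ.and (hc' ξ hξβ))).exists
  exact ⟨ξ, hξβ, hPc ▸ hPξ ▸ hPf.2⟩

theorem separates_of_eventually (hnorm : PklNormal κ lam U) (hfine : PklFine κ lam U)
    {β : Ordinal.{0}} {R : ↥(PklSet κ lam) → Ordinal.{0} → Ordinal.{0} → Prop}
    (hR : ∀ᶠ P in U, Separates (R P) P.1 (P.1 ∩ Iio β)) :
    Separates (fun y ζ ↦ ∀ᶠ P in U, R P y ζ) (Iio lam.ord) (Iio β) := by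
  intro y hy y' hy' hne
  have hζ : ∀ᶠ P in U, ∃ ζ, ζ ∈ P.1 ∩ Iio β ∧ ¬(R P y ζ ↔ R P y' ζ) :=
    ((hR.and (hfine y hy)).and (hfine y' hy')).mono fun P h ↦ by
      simpa only [exists_prop] using h.1.1 y h.1.2 y' h.2 hne
  obtain ⟨f, hf⟩ := hζ.choice
  obtain ⟨ζ, -, hfζ⟩ := hnorm.exists_eventually_eq (hf.mono fun _ h ↦ h.1.1)
  have hsep : ∀ᶠ P in U, ζ < β ∧ ¬(R P y ζ ↔ R P y' ζ) :=
    (hf.and hfζ).mono fun P h ↦ h.2 ▸ ⟨h.1.1.2, h.1.2⟩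
  obtain ⟨-, hζβ, -⟩ := hsep.exists
  refine ⟨ζ, hζβ, fun hiff ↦ ?_⟩
  rcases Ultrafilter.em U (fun P ↦ R P y ζ) with hyes | hno
  · obtain ⟨P, hP, h1, h2⟩ := (hsep.and (hyes.and (hiff.1 hyes))).exists
    exact hP.2 ⟨fun _ ↦ h2, fun _ ↦ h1⟩
  · have hno' : ∀ᶠ P in U, ¬R P y' ζ :=
      Ultrafilter.eventually_not.2 fun h ↦ Ultrafilter.eventually_not.1 hno (hiff.2 h)
    obtain ⟨P, hP, h1, h2⟩ := (hsep.and (hno.and hno')).exists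
    exact hP.2 ⟨fun h ↦ absurd h h1, fun h ↦ absurd h h2⟩

theorem eventually_otp_le_ord_cof (hnorm : PklNormal κ lam U) (hfine : PklFine κ lam U)
    (hlam : lam.IsRegular) : ∀ᶠ P : ↥(PklSet κ lam) in U, otp P.1 ≤ (otp P.1).cof.ord := by
  by_contra hcon
  have hsing : ∀ᶠ P : ↥(PklSet κ lam) in U,
      ∃ β, β ∈ P.1 ∧ ∃ c, IsCofinalMap c (P.1 ∩ Iio β) P.1 :=
    (Ultrafilter.eventually_not.2 hcon).mono fun P hP ↦ by
      simpa only [exists_prop] using exists_isCofinalMap_of_ord_cof_otp_lt P.2.1 (not_le.1 hP)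
  obtain ⟨βf, hβf⟩ := hsing.choice
  obtain ⟨c, hc⟩ := (hβf.mono fun _ ↦ And.right).choice
  obtain ⟨β, hβ, hβf_eq⟩ := hnorm.exists_eventually_eq (hβf.mono fun _ ↦ And.left)
  obtain ⟨c', hc'⟩ := hnorm.exists_isCofinalMap_Iio hfine hβ.le
    ((hc.and hβf_eq).mono fun _ h ↦ h.2 ▸ h.1)
  have hcof := lift_cof_otp_le_mk subset_rfl hc'
  rw [otp_Iio, hlam.cof_ord, mk_Iio_ordinal, Cardinal.lift_le] at hcof
  exact (hcof.trans_lt (lt_ord.1 hβ)).false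

theorem eventually_two_power_lt_otp (hnorm : PklNormal κ lam U) (hfine : PklFine κ lam U)
    (hlam : IsStrongPrelimit lam) {β : Ordinal.{0}} (hβ : β < lam.ord) :
    ∀ᶠ P : ↥(PklSet κ lam) in U,
      ((2 : Cardinal) ^ (otp (P.1 ∩ Iio β)).card).ord < otp P.1 := by
  by_contra hcon
  have hsep : ∀ᶠ P : ↥(PklSet κ lam) in U, ∃ R, Separates R P.1 (P.1 ∩ Iio β) :=
    (Ultrafilter.eventually_not.2 hcon).mono fun P hP ↦ mk_le_mk_set_iff_exists_separates.1 <| by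
      rw [mk_eq_lift_card_otp P.2.1, mk_set, mk_eq_lift_card_otp (inter_subset_left.trans P.2.1),
        ← lift_two_power, Cardinal.lift_le]
      exact (Ordinal.card_le_card (not_lt.1 hP)).trans_eq (card_ord _)
  obtain ⟨R, hR⟩ := hsep.choice
  have hmk := mk_le_mk_set_iff_exists_separates.2 ⟨_, hnorm.separates_of_eventually hfine hR⟩
  rw [mk_Iio_ordinal, card_ord, mk_set, mk_Iio_ordinal, ← lift_two_power, Cardinal.lift_le] at hmk
  exact (hmk.trans_lt (hlam (lt_ord.1 hβ))).false

theorem eventually_ord_cof_otp_inter_Iio_lt (hnorm : PklNormal κ lam U)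
    (hfine : PklFine κ lam U) {β : Ordinal.{0}} (hβ : β < lam.ord) (hsing : β.cof.ord < β) :
    ∀ᶠ P : ↥(PklSet κ lam) in U, (otp (P.1 ∩ Iio β)).cof.ord < otp (P.1 ∩ Iio β) := by
  rw [← otp_Iio β] at hsing
  obtain ⟨γ, hγ, c, hc⟩ := exists_isCofinalMap_of_ord_cof_otp_lt subset_rfl hsing
  have hβlam : Iio β ⊆ Iio lam.ord := Iio_subset_Iio hβ.le
  filter_upwards [hfine γ (hβlam hγ),
    hnorm.eventually_isCofinalMap_inter hfine (inter_subset_left.trans hβlam) hβlam hc]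
    with P hγP hcP
  exact ord_cof_otp_lt_of_isCofinalMap (inter_subset_left.trans P.2.1) ⟨hγP, hγ⟩
    (by rwa [inter_assoc])

theorem eventually_card_otp_inter_Iio_le (hnorm : PklNormal κ lam U) (hfine : PklFine κ lam U)
    {β γ : Ordinal.{0}} (hγ : γ ≤ lam.ord) (h : β.card ≤ 2 ^ γ.card) :
    ∀ᶠ P : ↥(PklSet κ lam) in U,
      (otp (P.1 ∩ Iio β)).card ≤ 2 ^ (otp (P.1 ∩ Iio γ)).card := by
  obtain ⟨R, hR⟩ := mk_le_mk_set_iff_exists_separates.1 <| show #(Iio β) ≤ #(Set (Iio γ)) by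
    rwa [mk_Iio_ordinal, mk_set, mk_Iio_ordinal, ← lift_two_power, Cardinal.lift_le]
  filter_upwards [hnorm.eventually_separates_inter hfine (Iio_subset_Iio hγ) hR] with P hP
  have hmk := mk_le_mk_set_iff_exists_separates.2 ⟨R, hP⟩
  rwa [mk_eq_lift_card_otp (inter_subset_left.trans P.2.1), mk_set,
    mk_eq_lift_card_otp (inter_subset_left.trans P.2.1), ← lift_two_power,
    Cardinal.lift_le] at hmk

theorem eventually_not_isInaccOrd_otp_inter_Iio (hnorm : PklNormal κ lam U)
    (hfine : PklFine κ lam U) (hlam : IsLeastInaccAbove κ lam) (hκ : ℵ₀ < κ)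
    {β : Ordinal.{0}} (hκβ : κ.ord < β) (hβ : β < lam.ord) :
    ∀ᶠ P : ↥(PklSet κ lam) in U, ¬IsInaccOrd (otp (P.1 ∩ Iio β)) := by
  rcases lt_or_ge β.cof.ord β with hsing | hreg
  · exact (hnorm.eventually_ord_cof_otp_inter_Iio_lt hfine hβ hsing).mono
      fun _ ↦ not_isInaccOrd_of_ord_cof_lt
  have hωβ : ω < β := (by simpa using ord_lt_ord.2 hκ : ω < κ.ord).trans hκβ
  obtain ⟨γ, hγβ, hβγ⟩ : ∃ γ < β, β ≤ ((2 : Cardinal) ^ γ.card).ord := by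
    by_contra! h
    exact hlam.not_isInaccOrd hκβ hβ (isInaccOrd_of_le_ord_cof hωβ hreg h)
  filter_upwards [hfine γ (hγβ.trans hβ), hnorm.eventually_card_otp_inter_Iio_le hfine
      (hγβ.trans hβ).le ((Ordinal.card_le_card hβγ).trans_eq (card_ord _))] with P hγP hcard
  have hseg : P.1 ∩ Iio β ∩ Iio γ = P.1 ∩ Iio γ := by
    rw [inter_assoc, Iio_inter_Iio, min_eq_right hγβ.le]
  exact not_isInaccOrd_of_card_le_two_power
    (hseg ▸ otp_inter_Iio_lt (inter_subset_left.trans P.2.1) ⟨hγP, hγβ⟩) hcard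

end PklNormal

theorem least_inaccessible_set_mem_general
    (κ lam : Cardinal.{0}) (huncount : ℵ₀ < κ)
    (hlam : IsLeastInaccAbove κ lam)
    (U : Ultrafilter ↥(PklSet κ lam))
    (hnorm : PklNormal κ lam U) (hfine : PklFine κ lam U) :
    {P : ↥(PklSet κ lam) | IsLeastInaccOrdAbove (kpt κ P.1) (lpt P.1)} ∈ U := by
  have hκ : κ.ord < lam.ord := ord_lt_ord.2 hlam.1
  have hω : ω < κ.ord := by simpa using ord_lt_ord.2 huncount
  filter_upwards [hfine _ hκ, hfine _ (hω.trans hκ),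
    hnorm.eventually_otp_le_ord_cof hfine hlam.2.1.isRegular,
    hnorm.eventually_forall_mem fun β hβ ↦
      hnorm.eventually_two_power_lt_otp hfine hlam.2.1.isStrongPrelimit hβ,
    hnorm.eventually_forall_mem fun β hβ ↦ eventually_imp_distrib_left.2 fun hκβ ↦
      hnorm.eventually_not_isInaccOrd_otp_inter_Iio hfine hlam huncount hκβ hβ]
    with P hκP hωP hreg hlim hgap
  have hk : kpt κ P.1 < lpt P.1 := otp_inter_Iio_lt P.2.1 hκP
  have hωk : ω < kpt κ P.1 := by
    obtain ⟨α, -, hα⟩ := P.2.2.2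
    rw [kpt, hα, otp_Iio]
    exact (hα ▸ ⟨hωP, hω⟩ : ω ∈ Iio α)
  refine ⟨hk, isInaccOrd_of_le_ord_cof (hωk.trans hk) hreg fun a ha ↦ ?_, fun o hko ho ↦ ?_⟩
  · obtain ⟨β, hβ, rfl⟩ := exists_otp_inter_Iio_eq P.2.1 ha
    exact hlim β hβ
  by_contra! hlt
  obtain ⟨β, hβ, rfl⟩ := exists_otp_inter_Iio_eq P.2.1 hlt
  rcases le_or_gt β κ.ord with hβκ | hκβ
  · exact (hko.trans_le (otp_mono (inter_subset_left.trans P.2.1)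
      (inter_subset_inter_right _ (Iio_subset_Iio hβκ)))).false
  · exact hgap β hβ hκβ ho

/-- If `κ` is regular uncountable, `λ` the least inaccessible above `κ`, and `U`
a `κ`-complete normal fine ultrafilter on `P_κ(λ)`, then
`D = {P : λ_P is the least inaccessible above κ_P}` belongs to `U`. -/
theorem least_inaccessible_set_mem
    (κ lam : Cardinal.{0}) (hreg : κ.IsRegular) (huncount : ℵ₀ < κ)
    (hlam : IsLeastInaccAbove κ lam)
    (U : Ultrafilter ↥(PklSet κ lam))
    (hcomp : PklComplete κ U) (hnorm : PklNormal κ lam U) (hfine : PklFine κ lam U) :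
    {P : ↥(PklSet κ lam) | IsLeastInaccOrdAbove (kpt κ P.1) (lpt P.1)} ∈ U :=
  least_inaccessible_set_mem_general κ lam huncount hlam U hnorm hfine
end

section
/- Let κ be an infinite regular cardinal and let λ > κ be an inaccessible cardinal. Then every antichain (set of pairwise incompatible conditions) in the Levy collapse Col(κ, <λ) has cardinality strictly less than λ. -/
/-!
Fix an antichain `T`. For `γ < λ` the conditions supported below `γ` are subsets of `κ × γ × γ`,
so there are fewer than `λ` of them; hence some `δ < λ` is such that every restriction `p ↾ γ`
with `p ∈ T` is also `q ↾ γ` for some `q ∈ T` supported below `δ`. Closing off under this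
`γ ↦ δ` along a sequence of length `κ` (the derivative `Ordinal.deriv`) yields `δ < λ` of
cofinality `κ` that is closed in this sense. Any `p ∈ T` meets `Col(κ, <δ)` in fewer than `κ`
points, which therefore lie below some `γ < δ`; the corresponding `q ∈ T` is compatible with `p`,
so `p = q` is supported below `δ`. Thus `T ⊆ 𝒫(κ × δ × δ)`, which has size `< λ`.
-/

open Set Cardinal

universe u

open Order

namespace Ordinal

theorem exists_forall_lt_of_mk_lt_cof {s : Set Ordinal.{u}} {o : Ordinal.{u}}
    (hs : #s < Cardinal.lift.{u + 1} o.cof) (hso : ∀ a ∈ s, a < o) :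
    ∃ γ < o, ∀ a ∈ s, a < γ := by
  rw [lift_cof] at hs
  have hbdd : BddAbove ((· + 1) '' s) :=
    ⟨o, by rintro _ ⟨a, ha, rfl⟩; exact add_one_le_of_lt (hso a ha)⟩
  exact ⟨_, sSup_add_one_lt_of_lt_cof hs hso, fun a ha =>
    (lt_add_one a).trans_le (le_csSup hbdd (mem_image_of_mem _ ha))⟩

theorem exists_apply_le_deriv (f : Ordinal.{u} → Ordinal.{u}) {o γ : Ordinal.{u}}
    (ho : IsSuccLimit o) (hγ : γ < deriv f o) :
    ∃ x, γ ≤ x ∧ x < deriv f o ∧ f x ≤ deriv f o := by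
  rw [deriv_limit f ho] at hγ
  have : Nonempty {a // a < o} := ⟨⟨0, ho.bot_lt⟩⟩
  obtain ⟨⟨a, ha⟩, hγa⟩ := exists_lt_of_lt_ciSup hγ
  have hsucc : deriv f (a + 1) < deriv f o := deriv_strictMono f (ho.succ_lt ha)
  rw [deriv_add_one] at hsucc
  exact ⟨deriv f a + 1, hγa.le.trans (lt_add_one _).le, (le_nfp _ _).trans_lt hsucc,
    (iterate_le_nfp f _ 1).trans hsucc.le⟩

end Ordinal

section Levy

variable {ν ρ : Cardinal.{0}} {s t : Set ((Ordinal.{0} × Ordinal.{0}) × Ordinal.{0})}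

/-- `s ↾ γ`: the part of a condition `s` of `Col(ν, <ρ)` that lies in `Col(ν, <γ)`. -/
def restrictBelow (γ : Ordinal.{0}) (s : Set ((Ordinal.{0} × Ordinal.{0}) × Ordinal.{0})) :
    Set ((Ordinal.{0} × Ordinal.{0}) × Ordinal.{0}) :=
  {x ∈ s | x.1.2 < γ}

def SupportedBelow (δ : Ordinal.{0}) (s : Set ((Ordinal.{0} × Ordinal.{0}) × Ordinal.{0})) :
    Prop :=
  ∀ x ∈ s, x.1.2 < δ

def levyBox (ν : Cardinal.{0}) (γ : Ordinal.{0}) :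
    Set ((Ordinal.{0} × Ordinal.{0}) × Ordinal.{0}) :=
  (Iio ν.ord ×ˢ Iio γ) ×ˢ Iio γ

theorem restrictBelow_restrictBelow_of_le {γ δ : Ordinal.{0}} (hγδ : γ ≤ δ) :
    restrictBelow γ (restrictBelow δ s) = restrictBelow γ s := by
  ext x
  simp only [restrictBelow, mem_sep_iff, and_assoc]
  exact and_congr_right fun _ => and_iff_right_of_imp fun hxγ => hxγ.trans_le hγδ

theorem restrictBelow_congr_of_le {γ δ : Ordinal.{0}} (hγδ : γ ≤ δ)
    (h : restrictBelow δ s = restrictBelow δ t) : restrictBelow γ s = restrictBelow γ t := by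
  rw [← restrictBelow_restrictBelow_of_le hγδ, h, restrictBelow_restrictBelow_of_le hγδ]

theorem IsLevyCond.mk_lt (hs : IsLevyCond ν ρ s) : #s < Cardinal.lift.{1} ν := by
  refine lt_of_le_of_lt (mk_le_of_injective
    (f := fun x : s => (⟨x.1.1, x.1, x.2, rfl⟩ : Prod.fst '' s)) fun a b hab => ?_) hs.2.2
  have h1 : a.1.1 = b.1.1 := congrArg Subtype.val hab
  exact Subtype.ext (Prod.ext h1 (hs.2.1 a.1 a.2 b.1 b.2 h1))

theorem IsLevyCond.union (hν : ℵ₀ ≤ ν) (hs : IsLevyCond ν ρ s) (ht : IsLevyCond ν ρ t)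
    (hst : ∀ x ∈ s, ∀ y ∈ t, x.1 = y.1 → x.2 = y.2) : IsLevyCond ν ρ (s ∪ t) := by
  refine ⟨fun x hx => hx.elim (hs.1 x) (ht.1 x), fun x hx y hy hxy => ?_, ?_⟩
  · rcases hx with hx | hx <;> rcases hy with hy | hy
    · exact hs.2.1 x hx y hy hxy
    · exact hst x hx y hy hxy
    · exact (hst y hy x hx hxy.symm).symm
    · exact ht.2.1 x hx y hy hxy
  · rw [image_union]
    exact (mk_union_le _ _).trans_lt
      (add_lt_of_lt (aleph0_le_lift.mpr hν) hs.2.2 ht.2.2)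

theorem IsLevyCond.restrictBelow_subset_levyBox (hs : IsLevyCond ν ρ s) (γ : Ordinal.{0}) :
    restrictBelow γ s ⊆ levyBox ν γ := fun x ⟨hx, hxγ⟩ =>
  ⟨⟨(hs.1 x hx).1, hxγ⟩, (hs.1 x hx).2.2.trans hxγ⟩

theorem IsLevyCond.exists_supportedBelow (hρ : ρ.IsRegular) (hνρ : ν ≤ ρ)
    (hs : IsLevyCond ν ρ s) : ∃ δ < ρ.ord, SupportedBelow δ s := by
  obtain ⟨δ, hδ, hδs⟩ := Ordinal.exists_forall_lt_of_mk_lt_cof (s := (fun x => x.1.2) '' s)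
    (o := ρ.ord) (by
      rw [hρ.cof_ord]
      exact mk_image_le.trans_lt (hs.mk_lt.trans_le (lift_le.mpr hνρ)))
    (by rintro _ ⟨x, hx, rfl⟩; exact (hs.1 x hx).2.1)
  exact ⟨δ, hδ, fun x hx => hδs _ (mem_image_of_mem _ hx)⟩

theorem mk_powerset_levyBox_lt (hρ : ρ.IsStrongLimit) (hνρ : ν < ρ) {γ : Ordinal.{0}}
    (hγ : γ < ρ.ord) : #(𝒫 levyBox ν γ) < Cardinal.lift.{1} ρ := by
  have hbox : #(levyBox ν γ) = Cardinal.lift.{1} (ν * γ.card * γ.card) := by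
    simp only [levyBox, mk_congr (Equiv.Set.prod _ _), mk_prod, mk_Iio_ordinal,
      card_ord, lift_mul, lift_id]
  have hγρ : γ.card < ρ := lt_ord.mp hγ
  have hprod : ν * γ.card * γ.card < ρ :=
    mul_lt_of_lt hρ.aleph0_le (mul_lt_of_lt hρ.aleph0_le hνρ hγρ) hγρ
  rw [mk_powerset, hbox, ← lift_two_power, lift_lt]
  exact hρ.isStrongPrelimit hprod

end Levy

section Antichain

variable {κ lam : Cardinal.{0}} {T : Set (Set ((Ordinal.{0} × Ordinal.{0}) × Ordinal.{0}))}
  {p q : Set ((Ordinal.{0} × Ordinal.{0}) × Ordinal.{0})}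

def RestrictionsRealizedBelow (T : Set (Set ((Ordinal.{0} × Ordinal.{0}) × Ordinal.{0})))
    (γ δ : Ordinal.{0}) : Prop :=
  ∀ p ∈ T, ∃ q ∈ T, restrictBelow γ q = restrictBelow γ p ∧ SupportedBelow δ q

theorem RestrictionsRealizedBelow.mono {γ γ' δ δ' : Ordinal.{0}}
    (h : RestrictionsRealizedBelow T γ δ) (hγ : γ' ≤ γ) (hδ : δ ≤ δ') :
    RestrictionsRealizedBelow T γ' δ' := fun p hp => by
  obtain ⟨q, hqT, hqp, hq⟩ := h p hp
  exact ⟨q, hqT, restrictBelow_congr_of_le hγ hqp, fun x hx => (hq x hx).trans_le hδ⟩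

theorem exists_restrictionsRealizedBelow (hlam : lam.IsInaccessible) (hkl : κ < lam)
    (hT : ∀ s ∈ T, IsLevyCond κ lam s) {γ : Ordinal.{0}} (hγ : γ < lam.ord) :
    ∃ δ < lam.ord, RestrictionsRealizedBelow T γ δ := by
  have hsection : ∀ r ∈ restrictBelow γ '' T, ∃ q ∈ T, restrictBelow γ q = r := fun _ hr => hr
  choose! σ hσT hσ using hsection
  choose! bound hbound_lt hbound using fun p (hp : p ∈ T) =>
    (hT p hp).exists_supportedBelow hlam.isRegular hkl.le
  have hrestrictions : restrictBelow γ '' T ⊆ 𝒫 levyBox κ γ := by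
    rintro _ ⟨p, hp, rfl⟩
    exact (hT p hp).restrictBelow_subset_levyBox γ
  obtain ⟨δ, hδ, hδbound⟩ := Ordinal.exists_forall_lt_of_mk_lt_cof
    (s := (bound ∘ σ) '' (restrictBelow γ '' T)) (o := lam.ord)
    (by
      rw [hlam.isRegular.cof_ord]
      exact mk_image_le.trans_lt ((mk_le_mk_of_subset hrestrictions).trans_lt
        (mk_powerset_levyBox_lt hlam.isStrongLimit hkl hγ)))
    (by rintro _ ⟨r, hr, rfl⟩; exact hbound_lt _ (hσT r hr))
  refine ⟨δ, hδ, fun p hp => ?_⟩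
  have hr : restrictBelow γ p ∈ restrictBelow γ '' T := mem_image_of_mem _ hp
  exact ⟨σ _, hσT _ hr, hσ _ hr, fun x hx =>
    (hbound _ (hσT _ hr) x hx).trans (hδbound _ (mem_image_of_mem _ hr))⟩

theorem IsLevyCond.union_of_restrictBelow_eq {γ δ : Ordinal.{0}} (hκ : ℵ₀ ≤ κ)
    (hp : IsLevyCond κ lam p) (hq : IsLevyCond κ lam q)
    (hpγ : ∀ x ∈ p, x.1.2 < δ → x.1.2 < γ) (hqp : restrictBelow γ q = restrictBelow γ p)
    (hqδ : SupportedBelow δ q) : IsLevyCond κ lam (p ∪ q) := by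
  refine hp.union hκ hq fun x hx y hy hxy => hq.2.1 x ?_ y hy hxy
  have hxγ : x.1.2 < γ := hpγ x hx (hxy ▸ hqδ y hy)
  have hxr : x ∈ restrictBelow γ q := hqp ▸ ⟨hx, hxγ⟩
  exact hxr.1

theorem supportedBelow_of_restrictionsRealizedBelow (hκ : ℵ₀ ≤ κ)
    (hT : ∀ s ∈ T, IsLevyCond κ lam s)
    (hanti : ∀ s ∈ T, ∀ t ∈ T, s ≠ t → ¬ IsLevyCond κ lam (s ∪ t))
    {δ : Ordinal.{0}} (hδ : κ ≤ δ.cof) (hrealized : ∀ γ < δ, RestrictionsRealizedBelow T γ δ)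
    (hp : p ∈ T) : SupportedBelow δ p := by
  obtain ⟨γ, hγδ, hγ⟩ := Ordinal.exists_forall_lt_of_mk_lt_cof
    (s := (fun x => x.1.2) '' restrictBelow δ p) (o := δ)
    (mk_image_le.trans_lt <| (mk_le_mk_of_subset (sep_subset _ _)).trans_lt <|
      (hT p hp).mk_lt.trans_le (lift_le.mpr hδ))
    (by rintro _ ⟨x, hx, rfl⟩; exact hx.2)
  obtain ⟨q, hqT, hqp, hqδ⟩ := hrealized γ hγδ p hp
  have hpγ : ∀ x ∈ p, x.1.2 < δ → x.1.2 < γ := fun x hx hxδ => hγ _ ⟨x, ⟨hx, hxδ⟩, rfl⟩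
  have hpq : p = q := by
    by_contra hne
    exact hanti p hp q hqT hne ((hT p hp).union_of_restrictBelow_eq hκ (hT q hqT) hpγ hqp hqδ)
  exact hpq ▸ hqδ

end Antichain

/-- for `λ > κ` inaccessible, every antichain of `Col(κ, <λ)` has size `< λ`. -/
theorem levy_antichain_small
    (κ lam : Cardinal.{0}) (hreg : κ.IsRegular) (hkl : κ < lam) (hlam : lam.IsInaccessible)
    (T : Set (Set ((Ordinal.{0} × Ordinal.{0}) × Ordinal.{0})))
    (hT : ∀ s ∈ T, IsLevyCond κ lam s)
    (hanti : ∀ s ∈ T, ∀ t ∈ T, s ≠ t → ¬ IsLevyCond κ lam (s ∪ t)) :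
    Cardinal.mk ↥T < Cardinal.lift.{1} lam := by
  choose! N hN_lt hN using fun γ (hγ : γ < lam.ord) =>
    exists_restrictionsRealizedBelow hlam hkl hT hγ
  have hκ_limit : IsSuccLimit κ.ord := isSuccLimit_ord hreg.aleph0_le
  set δ := Ordinal.deriv N κ.ord
  have hδ_lt : δ < lam.ord :=
    Cardinal.deriv_lt_ord hlam.isRegular hlam.aleph0_lt.ne' hN_lt (ord_lt_ord.mpr hkl)
  have hδ_cof : δ.cof = κ := by
    rw [Ordinal.cof_map_of_isNormal (Ordinal.isNormal_deriv N) hκ_limit, hreg.cof_ord]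
  have hrealized : ∀ γ < δ, RestrictionsRealizedBelow T γ δ := fun γ hγ => by
    obtain ⟨x, hγx, hxδ, hNx⟩ := Ordinal.exists_apply_le_deriv N hκ_limit hγ
    exact (hN x (hxδ.trans hδ_lt)).mono hγx hNx
  have hT_box : T ⊆ 𝒫 levyBox κ δ := fun p hp => by
    have hsupp := supportedBelow_of_restrictionsRealizedBelow hreg.aleph0_le hT hanti
      hδ_cof.ge hrealized hp
    exact fun x hx => (hT p hp).restrictBelow_subset_levyBox δ ⟨hx, hsupp x hx⟩
  exact (mk_le_mk_of_subset hT_box).trans_lt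
    (mk_powerset_levyBox_lt hlam.isStrongLimit hkl hδ_lt)
end
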